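/- Let A = kQ/I be an algebra having a semi-normed basis. If w₁ and w₂ are two non-zero paths of Q which are naturally homotopic (w₁ ∼∘ w₂), then there exists a scalar λ ∈ k such that w̄₂ = λ·w̄₁ in A; in particular w̄₁ and w̄₂ are linearly dependent. -/

import Mathlib

open Quiver CategoryTheory

namespace BoundQuiver

variable (k : Type) [Field k] {V : Type} [Quiver.{0} V]

/-- `k`-linear combinations of parallel paths from `a` to `b`: the space `kQ(a,b)`. -/
abbrev PathVec (a b : V) := Quiver.Path a b →₀ k

variable {k}

/-- Concatenation of paths, extended bilinearly to linear combinations of paths.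
This is the multiplication of the path algebra `kQ`. -/
noncomputable def pathVecComp {a b c : V} (f : PathVec k a b) (g : PathVec k b c) :
    PathVec k a c :=
  f.sum fun p cp => g.sum fun q cq => Finsupp.single (p.comp q) (cp * cq)

variable (k) (V) in
/-- A two-sided ideal of the path algebra `kQ`, presented as a family of subspaces
`I(a,b) ⊆ kQ(a,b)` which is stable under left and right concatenation with paths. -/
structure PathIdeal where
  I : ∀ a b : V, Submodule k (PathVec k a b)
  comp_single_left : ∀ {a b c : V} (p : Quiver.Path a b) {ρ : PathVec k b c},
    ρ ∈ I b c → pathVecComp (Finsupp.single p 1) ρ ∈ I a c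
  comp_single_right : ∀ {a b c : V} (q : Quiver.Path b c) {ρ : PathVec k a b},
    ρ ∈ I a b → pathVecComp ρ (Finsupp.single q 1) ∈ I a c

/-- A path lies in the ideal `J`. -/
def PathIdeal.memP (J : PathIdeal k V) {a b : V} (p : Quiver.Path a b) : Prop :=
  Finsupp.single p (1 : k) ∈ J.I a b

/-- `J` is an admissible ideal: `F^m ⊆ J ⊆ F²` for some `m ≥ 2`, where `F` is the
ideal generated by the arrows. -/
def PathIdeal.IsAdmissible (J : PathIdeal k V) : Prop :=
  (∃ m : ℕ, 2 ≤ m ∧ ∀ {a b : V} (p : Quiver.Path a b), m ≤ p.length → J.memP p) ∧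
    ∀ {a b : V}, ∀ ρ ∈ J.I a b, ∀ p ∈ ρ.support, 2 ≤ (p : Quiver.Path a b).length

/-- The restriction `∑_{p ∈ s} λ_p p` of a linear combination of paths to a subset `s`
of its support. -/
noncomputable def restrictVec {a b : V} (ρ : PathVec k a b) (s : Finset (Quiver.Path a b)) :
    PathVec k a b :=
  ∑ p ∈ s, Finsupp.single p (ρ p)

/-- A relation `ρ = ∑ λ_i w_i ∈ I(a,b)` is minimal if it has at least two terms and no proper
nonempty subsum lies in the ideal. -/
structure IsMinimalRelation (J : PathIdeal k V) {a b : V} (ρ : PathVec k a b) : Prop where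
  mem : ρ ∈ J.I a b
  two_le_card : 2 ≤ ρ.support.card
  minimal : ∀ s : Finset (Quiver.Path a b), s ⊆ ρ.support → s.Nonempty → s ≠ ρ.support →
    restrictVec ρ s ∉ J.I a b

/-- The natural homotopy relation `∼∘` on parallel paths: the smallest equivalence relation
identifying any two paths appearing in a common minimal relation, and compatible with
concatenation. -/
inductive NatHomotopic (J : PathIdeal k V) : ∀ {a b : V}, Quiver.Path a b → Quiver.Path a b → Prop
  | minrel {a b : V} {ρ : PathVec k a b} (hρ : IsMinimalRelation J ρ)
      {p q : Quiver.Path a b} (hp : p ∈ ρ.support) (hq : q ∈ ρ.support) : NatHomotopic J p q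
  | comp {a b c d : V} (w : Quiver.Path a b) {p q : Quiver.Path b c} (w' : Quiver.Path c d) :
      NatHomotopic J p q → NatHomotopic J ((w.comp p).comp w') ((w.comp q).comp w')
  | refl {a b : V} (p : Quiver.Path a b) : NatHomotopic J p p
  | symm {a b : V} {p q : Quiver.Path a b} : NatHomotopic J p q → NatHomotopic J q p
  | trans {a b : V} {p q r : Quiver.Path a b} :
      NatHomotopic J p q → NatHomotopic J q r → NatHomotopic J p r

/-- Natural homotopy, as a relation on paths with arbitrary (not necessarily
definitionally equal) endpoints. -/
def NatHomotopicS (J : PathIdeal k V) (s t : Σ a b : V, Quiver.Path a b) : Prop :=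
  ∃ (h₁ : s.1 = t.1) (h₂ : s.2.1 = t.2.1),
    NatHomotopic J (cast (congrArg₂ (fun a b => Quiver.Path a b) h₁ h₂) s.2.2) t.2.2

/-- A walk in `Q`, i.e. a path in the symmetrification of `Q`. -/
abbrev Walk (a b : V) := Quiver.Path (Quiver.Symmetrify.of.obj a) (Quiver.Symmetrify.of.obj b)

/-- A path, viewed as a walk. -/
abbrev toWalk {a b : V} (p : Quiver.Path a b) : Walk a b :=
  Quiver.Symmetrify.of.mapPath p

/-- The homotopy relation `∼` on walks: the smallest equivalence relation which cancels
`α α⁻¹`, identifies parallel paths appearing in a common minimal relation, and is compatible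
with concatenation of walks. -/
inductive WalkHomotopic (J : PathIdeal k V) :
    ∀ {a b : Quiver.Symmetrify V}, Quiver.Path a b → Quiver.Path a b → Prop
  | cancel {a b : Quiver.Symmetrify V} (f : a ⟶ b) :
      WalkHomotopic J (f.toPath.comp (Quiver.reverse f).toPath) Quiver.Path.nil
  | minrel {a b : V} {ρ : PathVec k a b} (hρ : IsMinimalRelation J ρ)
      {p q : Quiver.Path a b} (hp : p ∈ ρ.support) (hq : q ∈ ρ.support) :
      WalkHomotopic J (toWalk p) (toWalk q)
  | comp {a b c d : Quiver.Symmetrify V} (w : Quiver.Path a b) {p q : Quiver.Path b c}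
      (w' : Quiver.Path c d) : WalkHomotopic J p q →
      WalkHomotopic J ((w.comp p).comp w') ((w.comp q).comp w')
  | refl {a b : Quiver.Symmetrify V} (p : Quiver.Path a b) : WalkHomotopic J p p
  | symm {a b : Quiver.Symmetrify V} {p q : Quiver.Path a b} :
      WalkHomotopic J p q → WalkHomotopic J q p
  | trans {a b : Quiver.Symmetrify V} {p q r : Quiver.Path a b} :
      WalkHomotopic J p q → WalkHomotopic J q r → WalkHomotopic J p r

namespace WalkHomotopic

variable {J : PathIdeal k V}

lemma comp_right {a b c : Quiver.Symmetrify V} {p q : Quiver.Path a b} (h : WalkHomotopic J p q)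
    (r : Quiver.Path b c) : WalkHomotopic J (p.comp r) (q.comp r) := by
  have := WalkHomotopic.comp Quiver.Path.nil r h
  simpa using this

lemma comp_left {a b c : Quiver.Symmetrify V} (r : Quiver.Path a b) {p q : Quiver.Path b c}
    (h : WalkHomotopic J p q) : WalkHomotopic J (r.comp p) (r.comp q) := by
  have := WalkHomotopic.comp r Quiver.Path.nil h
  simpa using this

lemma congr {a b c : Quiver.Symmetrify V} {p p' : Quiver.Path a b} {q q' : Quiver.Path b c}
    (h : WalkHomotopic J p p') (h' : WalkHomotopic J q q') :
    WalkHomotopic J (p.comp q) (p'.comp q') :=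
  (h.comp_right q).trans (comp_left p' h')

lemma comp_reverse {a b : Quiver.Symmetrify V} (p : Quiver.Path a b) :
    WalkHomotopic J (p.comp p.reverse) Quiver.Path.nil := by
  induction p with
  | nil => exact WalkHomotopic.refl _
  | cons p f ih =>
    rename_i b'
    have h1 : ((p.cons f).comp (p.cons f).reverse)
        = (p.comp (f.toPath.comp (Quiver.reverse f).toPath)).comp p.reverse := by
      show ((p.comp f.toPath).comp ((Quiver.reverse f).toPath.comp p.reverse)) = _
      rw [← Quiver.Path.comp_assoc, ← Quiver.Path.comp_assoc]
    rw [h1]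
    have h2 := WalkHomotopic.comp p p.reverse (WalkHomotopic.cancel (J := J) f)
    simpa using h2.trans ih

lemma reverse_comp {a b : Quiver.Symmetrify V} (p : Quiver.Path a b) :
    WalkHomotopic J (p.reverse.comp p) Quiver.Path.nil := by
  have := comp_reverse (J := J) p.reverse
  rwa [Quiver.Path.reverse_reverse] at this

lemma reverse_mono {a b : Quiver.Symmetrify V} {p q : Quiver.Path a b}
    (h : WalkHomotopic J p q) : WalkHomotopic J p.reverse q.reverse := by
  have h1 : WalkHomotopic J p.reverse ((p.reverse.comp q).comp q.reverse) := by
    have := (comp_left p.reverse (comp_reverse (J := J) q)).symm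
    simpa [← Quiver.Path.comp_assoc] using this
  have h2 : WalkHomotopic J ((p.reverse.comp q).comp q.reverse)
      ((p.reverse.comp p).comp q.reverse) :=
    comp_right (comp_left p.reverse h.symm) q.reverse
  have h3 : WalkHomotopic J ((p.reverse.comp p).comp q.reverse) q.reverse := by
    have := comp_right (reverse_comp (J := J) p) q.reverse
    simpa using this
  exact (h1.trans h2).trans h3

end WalkHomotopic

/-- The setoid of walks from `a` to `b`, up to homotopy. -/
def walkSetoid (J : PathIdeal k V) (a b : V) :
    Setoid (Quiver.Path (Quiver.Symmetrify.of.obj a) (Quiver.Symmetrify.of.obj b)) :=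
  ⟨WalkHomotopic J, ⟨WalkHomotopic.refl, WalkHomotopic.symm, WalkHomotopic.trans⟩⟩

/-- The fundamental group `π₁(Q, I)` of a bound quiver at the base point `x₀`:
homotopy classes of closed walks at `x₀` (i.e. `π₁(Q,x₀)/N(Q,I,x₀)`). -/
def piOne (J : PathIdeal k V) (x₀ : V) : Type :=
  Quotient (walkSetoid J x₀ x₀)

noncomputable instance (J : PathIdeal k V) (x₀ : V) : Group (piOne J x₀) where
  mul := Quotient.map₂ Quiver.Path.comp fun _ _ h _ _ h' => h.congr h'
  one := Quotient.mk _ Quiver.Path.nil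
  inv := Quotient.map Quiver.Path.reverse fun _ _ h => h.reverse_mono
  mul_assoc := by
    rintro ⟨a⟩ ⟨b⟩ ⟨c⟩
    exact congrArg (Quotient.mk _) (Quiver.Path.comp_assoc ..)
  one_mul := by
    rintro ⟨a⟩
    exact congrArg (Quotient.mk _) (Quiver.Path.nil_comp a)
  mul_one := by
    rintro ⟨a⟩
    exact congrArg (Quotient.mk _) (Quiver.Path.comp_nil a)
  inv_mul_cancel := by
    rintro ⟨a⟩
    exact Quotient.sound (WalkHomotopic.reverse_comp a)

/-- The quiver `Q` is connected (as an undirected graph). -/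
def QuiverConnected (W : Type) [Quiver.{0} W] : Prop :=
  ∀ a b : W, Nonempty (Walk a b)

/-- The quiver `Q` is triangular, i.e. has no oriented cycles. -/
def Triangular (W : Type) [Quiver.{0} W] : Prop :=
  ∀ (a : W) (p : Quiver.Path a a), p.length = 0

end BoundQuiver
section Classifying

open CategoryTheory

namespace BoundQuiver

variable {k : Type} [Field k] {V : Type} [Quiver.{0} V]

/-- The length of a path (helper forcing elaboration at the level of the quiver `V`). -/
def pathLen {a b : V} (p : Quiver.Path a b) : ℕ := p.length

/-- The natural homotopy relation, as a relation on the hom-sets of the path category. -/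
def natHomRel (J : PathIdeal k V) : HomRel (Paths V) :=
  fun _ _ p q => NatHomotopic J p q

/-- The homotopy relation on paths, as a relation on the hom-sets of the path category. -/
def walkHomRel (J : PathIdeal k V) : HomRel (Paths V) :=
  fun _ _ p q => WalkHomotopic J (toWalk p) (toWalk q)

variable (J : PathIdeal k V) (r : HomRel (Paths V))

/-- A chain of composable paths, all of whose segments avoid the ideal `J`
("chains with non-zero composite"). -/
def NonzeroChain {n : ℕ} (F : ComposableArrows (Paths V) n) : Prop :=
  ∀ (i j : Fin (n + 1)) (f : i ⟶ j), ¬ J.memP (F.map f)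

/-- A chain all of whose segments have length at most one (i.e. a chain in the underlying
graph of the quiver). -/
def GraphChain {n : ℕ} (F : ComposableArrows (Paths V) n) : Prop :=
  ∀ (i j : Fin (n + 1)) (f : i ⟶ j), pathLen (F.map f) ≤ 1

/-- The simplicial set whose geometric realization is the classifying space of the
bound quiver: an `n`-simplex is a chain of `n` composable morphisms in the quotient
of the path category by the relation `r` which admits a lift to a chain of paths whose
segments are not in `J`. -/
noncomputable def BSSet : SSet where
  obj Δ := {G : ComposableArrows (CategoryTheory.Quotient r) (Δ.unop.len) //
      ∃ F : ComposableArrows (Paths V) (Δ.unop.len),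
        NonzeroChain J F ∧ F ⋙ CategoryTheory.Quotient.functor r = G}
  map f := TypeCat.ofHom fun x => ⟨(nerve (CategoryTheory.Quotient r)).map f x.val, by
      obtain ⟨F, hF, hFG⟩ := x.2
      refine ⟨(nerve (Paths V)).map f F, fun i j g => hF _ _ _, ?_⟩
      rw [← hFG]; rfl⟩
  map_id Δ := by
    ext x
    exact congrArg (fun g => g x.val) ((nerve (CategoryTheory.Quotient r)).map_id Δ)
  map_comp f g := by
    ext x
    exact congrArg (fun g => g x.val) ((nerve (CategoryTheory.Quotient r)).map_comp f g)

/-- The geometric realization of `BSSet J r`. For `r` the natural homotopy relation this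
is the classifying space `B(Q,I)`; for `r` the homotopy relation it is the total
classifying space `B^♯(Q,I)`. -/
noncomputable def BSpace : TopCat :=
  SSet.toTop.obj (BSSet J r)

/-- The classifying space `B(Q,I)` of the bound quiver `(Q,I)`. -/
noncomputable abbrev ClassifyingSpace (J : PathIdeal k V) : TopCat :=
  BSpace J (natHomRel J)

/-- The total classifying space `B^♯(Q,I)` of the bound quiver `(Q,I)`. -/
noncomputable abbrev TotalClassifyingSpace (J : PathIdeal k V) : TopCat :=
  BSpace J (walkHomRel J)

/-- The sub-simplicial set of `BSSet` corresponding to the underlying graph `Q̄` of `Q`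
(the `1`-skeleton given by vertices and arrows). -/
noncomputable def GraphSSet : SSet where
  obj Δ := {G : ComposableArrows (CategoryTheory.Quotient r) (Δ.unop.len) //
      ∃ F : ComposableArrows (Paths V) (Δ.unop.len),
        NonzeroChain J F ∧ GraphChain F ∧ F ⋙ CategoryTheory.Quotient.functor r = G}
  map f := TypeCat.ofHom fun x => ⟨(nerve (CategoryTheory.Quotient r)).map f x.val, by
      obtain ⟨F, hF, hlen, hFG⟩ := x.2
      refine ⟨(nerve (Paths V)).map f F, fun i j g => hF _ _ _,
        fun i j g => hlen _ _ _, ?_⟩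
      rw [← hFG]; rfl⟩
  map_id Δ := by
    ext x
    exact congrArg (fun g => g x.val) ((nerve (CategoryTheory.Quotient r)).map_id Δ)
  map_comp f g := by
    ext x
    exact congrArg (fun g => g x.val) ((nerve (CategoryTheory.Quotient r)).map_comp f g)

/-- The inclusion of the underlying graph into the classifying space, at the simplicial
level. -/
noncomputable def graphInclusion : GraphSSet J r ⟶ BSSet J r where
  app Δ := TypeCat.ofHom fun x => ⟨x.val, by obtain ⟨F, h1, _, h3⟩ := x.2; exact ⟨F, h1, h3⟩⟩
  naturality Δ Δ' f := by
    ext x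
    rfl

/-- The underlying graph `Q̄`, viewed as a subspace of the classifying space. -/
noncomputable def graphSubspace : Set (BSpace J r) :=
  Set.range (SSet.toTop.map (graphInclusion J r))

/-- `A` is a deformation retract of `X`: there is a retraction of `X` onto `A` which is
homotopic to the identity of `X`. -/
def IsDeformationRetract {X : Type*} [TopologicalSpace X] (A : Set X) : Prop :=
  ∃ retr : ContinuousMap X X, Set.range retr ⊆ A ∧ (∀ a ∈ A, retr a = a) ∧
    Nonempty ((ContinuousMap.id X).Homotopy retr)

/-- The ideal `J` is monomial: every path occurring in the support of an element of `J`
already lies in `J` (equivalently, `J` is generated by paths). -/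
def PathIdeal.IsMonomial (J : PathIdeal k V) : Prop :=
  ∀ {a b : V}, ∀ ρ ∈ J.I a b, ∀ p ∈ ρ.support, J.memP (p : Quiver.Path a b)

/-- The algebra `kQ/J` is almost triangular: if there is a nontrivial path from `x` to `y`
avoiding `J` then all nontrivial paths from `y` to `x` lie in `J`. -/
def AlmostTriangular (J : PathIdeal k V) : Prop :=
  ∀ x y : V, (∃ p : Quiver.Path x y, 0 < p.length ∧ ¬ J.memP p) →
    ∀ q : Quiver.Path y x, 0 < q.length → J.memP q

section Cells

/-- A chain in the quotient category is nondegenerate if none of its elementary arrows is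
an identity. -/
def CellNondegenerate {n : ℕ} (G : ComposableArrows (CategoryTheory.Quotient r) n) : Prop :=
  ∀ i : Fin n, ¬ ∃ h : G.obj i.castSucc = G.obj i.succ,
    G.map (homOfLE (Fin.castSucc_le_succ i)) = eqToHom h

/-- `G` is an `n`-cell of the classifying space. -/
def IsCell {n : ℕ} (G : ComposableArrows (CategoryTheory.Quotient r) n) : Prop :=
  (∃ F : ComposableArrows (Paths V) n,
      NonzeroChain J F ∧ F ⋙ CategoryTheory.Quotient.functor r = G) ∧
    CellNondegenerate r G

/-- The set of `n`-cells of the classifying space. -/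
def Cell (n : ℕ) : Type :=
  {G : ComposableArrows (CategoryTheory.Quotient r) n // IsCell J r G}

/-- `x` is a boundary point (i.e. a vertex) of the cell `c`. -/
def Cell.hasVertex {J' : PathIdeal k V} {r' : HomRel (Paths V)} {n : ℕ}
    (c : Cell J' r' n) (x : V) : Prop :=
  ∃ j : Fin (n + 1), (c.val.obj j).as = (Paths.of V).obj x

/-- The `i`-th face of a chain. -/
noncomputable def cellFace {n : ℕ} (i : Fin (n + 2))
    (G : ComposableArrows (CategoryTheory.Quotient r) (n + 1)) :
    ComposableArrows (CategoryTheory.Quotient r) n :=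
  G.whiskerLeft (Fin.succAboveOrderEmb i).monotone.functor

/-- Projection of an arbitrary chain to the free abelian group on cells, sending chains
which are not cells to `0`. -/
noncomputable def cellProj (n : ℕ) (G : ComposableArrows (CategoryTheory.Quotient r) n) :
    Cell J r n →₀ ℤ :=
  letI := Classical.propDecidable
  if h : IsCell J r G then Finsupp.single ⟨G, h⟩ 1 else 0

/-- The boundary operator of the cellular chain complex `C_•(B)`: the alternating sum of
the faces. -/
noncomputable def cellBoundary (n : ℕ) : (Cell J r (n + 1) →₀ ℤ) →+ (Cell J r n →₀ ℤ) :=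
  Finsupp.liftAddHom fun c => zmultiplesHom _
    (∑ i : Fin (n + 2), (-1 : ℤ) ^ (i : ℕ) • cellProj J r n (cellFace r i c.val))

/-- The cellular homology groups `H_i(B)` of the classifying space. -/
noncomputable def cellHomology : ℕ → Type
  | 0 => (Cell J r 0 →₀ ℤ) ⧸ (cellBoundary J r 0).range
  | (n + 1) => (cellBoundary J r n).ker ⧸
      ((cellBoundary J r (n + 1)).range.addSubgroupOf (cellBoundary J r n).ker)

noncomputable instance (i : ℕ) : AddCommGroup (cellHomology J r i) := by
  cases i <;> (dsimp [cellHomology]; infer_instance)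

/-- Precomposition with an additive map, as an additive map on hom groups. -/
def precompHom {A B G : Type*} [AddCommGroup A] [AddCommGroup B] [AddCommGroup G]
    (d : A →+ B) : (B →+ G) →+ (A →+ G) where
  toFun f := f.comp d
  map_zero' := rfl
  map_add' f g := rfl

/-- The cellular cohomology groups `H^i(B, G)` of the classifying space with coefficients
in an abelian group `G`. -/
noncomputable def cellCohomology (G : Type) [AddCommGroup G] : ℕ → Type
  | 0 => (precompHom (G := G) (cellBoundary J r 0)).ker
  | (n + 1) => (precompHom (G := G) (cellBoundary J r (n + 1))).ker ⧸
      ((precompHom (G := G) (cellBoundary J r n)).range.addSubgroupOf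
        (precompHom (G := G) (cellBoundary J r (n + 1))).ker)

noncomputable instance (G : Type) [AddCommGroup G] (i : ℕ) :
    AddCommGroup (cellCohomology J r G i) := by
  cases i <;> (dsimp [cellCohomology]; infer_instance)

end Cells

end BoundQuiver

end Classifying
section Algebras

open CategoryTheory TensorProduct

namespace BoundQuiver

variable (k : Type) [Field k] (A : Type) [Ring A] [Algebra k A]
variable (V : Type) [Quiver.{0} V] [Fintype V]

/-- A presentation `A ≅ kQ/I` of the algebra `A` by the bound quiver `(Q,I)`: the data of
the images in `A` of the paths of `Q`, multiplicativity, orthogonality of the stationary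
idempotents, surjectivity, together with the (admissible) kernel ideal `I`. -/
structure Presentation where
  pathMap : ∀ {a b : V}, Quiver.Path a b → A
  map_comp : ∀ {a b c : V} (p : Quiver.Path a b) (q : Quiver.Path b c),
    pathMap (p.comp q) = pathMap p * pathMap q
  orth : ∀ {a b c d : V} (p : Quiver.Path a b) (q : Quiver.Path c d),
    b ≠ c → pathMap p * pathMap q = 0
  sum_idem : ∑ x : V, pathMap (Quiver.Path.nil : Quiver.Path x x) = 1
  spans : Submodule.span k
    (Set.range fun s : Σ a b : V, Quiver.Path a b => pathMap s.2.2) = ⊤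
  toIdeal : PathIdeal k V
  mem_toIdeal_iff : ∀ {a b : V} (ρ : PathVec k a b),
    ρ ∈ toIdeal.I a b ↔ ρ.sum (fun p c => c • pathMap p) = 0
  admissible : toIdeal.IsAdmissible

variable {k A V}
variable (P : Presentation k A V)

/-- The primitive idempotent `e_x` of `A` attached to the vertex `x`. -/
noncomputable def Presentation.idem (x : V) : A :=
  P.pathMap (Quiver.Path.nil : Quiver.Path x x)

/-- The corner space `e_x A e_y` of the algebra. -/
noncomputable def Presentation.corner (x y : V) : Submodule k A :=
  LinearMap.range ((LinearMap.mulLeft k (P.idem x)).comp (LinearMap.mulRight k (P.idem y)))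

/-- `A` is schurian: `dim_k e_x A e_y ≤ 1` for all vertices. -/
noncomputable def Presentation.Schurian : Prop :=
  ∀ x y : V, Module.finrank k (P.corner x y) ≤ 1

/-- `A` is constricted: `dim_k e_x A e_y = 1` for every arrow `x ⟶ y`. -/
noncomputable def Presentation.Constricted : Prop :=
  ∀ {x y : V}, (x ⟶ y) → Module.finrank k (P.corner x y) = 1

/-- `A` is semi-commutative: for parallel paths `w, w'`, one has `w ∈ I` iff `w' ∈ I`. -/
def Presentation.SemiCommutative : Prop :=
  ∀ {x y : V} (p q : Quiver.Path x y), P.toIdeal.memP p ↔ P.toIdeal.memP q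

/-- A semi-normed basis of `A`: a family of bases `B_{xy}` of the corner spaces
`e_x A e_y` containing the idempotents and the arrows, and such that the product of two
basis vectors is a scalar multiple of a basis vector whenever it is non-zero. -/
structure SemiNormedBasis where
  B : V → V → Set A
  subset_corner : ∀ x y : V, B x y ⊆ (P.corner x y : Set A)
  indep : ∀ x y : V, LinearIndependent k ((↑) : B x y → A)
  span_corner : ∀ x y : V, Submodule.span k (B x y) = P.corner x y
  idem_mem : ∀ x : V, P.idem x ∈ B x x
  arrow_mem : ∀ {x y : V} (f : x ⟶ y), P.pathMap f.toPath ∈ B x y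
  mul_mem : ∀ {x y z : V}, ∀ σ ∈ B x y, ∀ σ' ∈ B y z,
    σ * σ' = 0 ∨ ∃ (lam : k) (b : A), b ∈ B x z ∧ σ * σ' = lam • b

variable (S : SemiNormedBasis P)

/-- Validity condition for the basis elements of the simplicial chain group `SC_n(A)`:
a tuple of non-stationary basis vectors with non-zero product. -/
def SCValid {n : ℕ} (t : (Fin (n + 1) → V) × (Fin n → A)) : Prop :=
  (∀ i : Fin n, t.2 i ∈ S.B (t.1 i.castSucc) (t.1 i.succ)) ∧
    (∀ (i : Fin n) (j : V), t.2 i ≠ P.idem j) ∧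
    ((List.ofFn t.2).prod ≠ 0 ∨ n = 0)

/-- The canonical basis of the simplicial chain group `SC_n(A)`. -/
def SCBasis (n : ℕ) : Type :=
  {t : (Fin (n + 1) → V) × (Fin n → A) // SCValid P S t}

/-- The simplicial chain group `SC_n(A)`: the free abelian group on `SCBasis`. -/
def SCgroup (n : ℕ) : Type := SCBasis P S n →₀ ℤ

noncomputable instance (n : ℕ) : AddCommGroup (SCgroup P S n) :=
  inferInstanceAs (AddCommGroup (SCBasis P S n →₀ ℤ))

/-- A choice of the basis vector `b(σ, σ')` with `σσ' = λ ⬝ b(σ, σ')`. -/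
noncomputable def bChoice (x y : A) : A :=
  letI := Classical.propDecidable
  if h : ∃ p : k × A, (∃ i j : V, p.2 ∈ S.B i j) ∧ x * y = p.1 • p.2 then h.choose.2 else 0

/-- Face deleting the first entry of a tuple. -/
def rawHead {n : ℕ} (t : (Fin (n + 2) → V) × (Fin (n + 1) → A)) :
    (Fin (n + 1) → V) × (Fin n → A) :=
  (t.1 ∘ Fin.succ, t.2 ∘ Fin.succ)

/-- Face deleting the last entry of a tuple. -/
def rawLast {n : ℕ} (t : (Fin (n + 2) → V) × (Fin (n + 1) → A)) :
    (Fin (n + 1) → V) × (Fin n → A) :=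
  (t.1 ∘ Fin.castSucc, t.2 ∘ Fin.castSucc)

/-- Inner face composing the `j`-th and `(j+1)`-st entries of a tuple. -/
noncomputable def rawMid {n : ℕ} (j : Fin n) (t : (Fin (n + 2) → V) × (Fin (n + 1) → A)) :
    (Fin (n + 1) → V) × (Fin n → A) :=
  (t.1 ∘ Fin.succAbove j.succ.castSucc, fun i =>
    if (i : ℕ) < (j : ℕ) then t.2 i.castSucc
    else if (i : ℕ) = (j : ℕ) then bChoice P S (t.2 j.castSucc) (t.2 j.succ)
    else t.2 i.succ)

/-- Projection onto the free abelian group on valid tuples. -/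
noncomputable def SCproj (n : ℕ) (t : (Fin (n + 1) → V) × (Fin n → A)) : SCgroup P S n :=
  letI := Classical.propDecidable
  if h : SCValid P S t then Finsupp.single ⟨t, h⟩ 1 else 0

/-- The differential of the simplicial chain complex `SC_•(A)`. -/
noncomputable def SCboundary (n : ℕ) : SCgroup P S (n + 1) →+ SCgroup P S n :=
  Finsupp.liftAddHom fun t => zmultiplesHom _
    (SCproj P S n (rawHead t.val)
      + (∑ j : Fin n, (-1 : ℤ) ^ ((j : ℕ) + 1) • SCproj P S n (rawMid P S j t.val))
      + (-1 : ℤ) ^ (n + 1) • SCproj P S n (rawLast t.val))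

/-- The simplicial homology groups `SH_i(A)` of the algebra `A` (with respect to the
semi-normed basis `S`). -/
noncomputable def SH : ℕ → Type
  | 0 => SCgroup P S 0 ⧸ (SCboundary P S 0).range
  | (n + 1) => (SCboundary P S n).ker ⧸
      ((SCboundary P S (n + 1)).range.addSubgroupOf (SCboundary P S n).ker)

noncomputable instance (i : ℕ) : AddCommGroup (SH P S i) := by
  cases i <;> (dsimp [SH]; infer_instance)

/-- The simplicial cohomology groups `SH^i(A, G)` of the algebra `A` with coefficients in
an abelian group `G` (with respect to the semi-normed basis `S`). -/
noncomputable def SHco (G : Type) [AddCommGroup G] : ℕ → Type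
  | 0 => (precompHom (G := G) (SCboundary P S 0)).ker
  | (n + 1) => (precompHom (G := G) (SCboundary P S (n + 1))).ker ⧸
      ((precompHom (G := G) (SCboundary P S n)).range.addSubgroupOf
        (precompHom (G := G) (SCboundary P S (n + 1))).ker)

noncomputable instance (G : Type) [AddCommGroup G] (i : ℕ) :
    AddCommGroup (SHco P S G i) := by
  cases i <;> (dsimp [SHco]; infer_instance)

variable (k) (A) in
/-- The Hochschild cohomology `HH^n(A) = Ext^n_{A^e}(A, A)` of `A`, where
`A^e = A ⊗_k Aᵐᵒᵖ` is the enveloping algebra. -/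
noncomputable def HochschildCohomology (n : ℕ) : ModuleCat k :=
  letI : Module (A ⊗[k] Aᵐᵒᵖ) A := TensorProduct.Algebra.module
  ((Ext k (ModuleCat (A ⊗[k] Aᵐᵒᵖ)) n).obj
    (Opposite.op (ModuleCat.of (A ⊗[k] Aᵐᵒᵖ) A))).obj (ModuleCat.of (A ⊗[k] Aᵐᵒᵖ) A)

end BoundQuiver

end Algebras
section Coverings

open CategoryTheory

namespace BoundQuiver

variable {k : Type} [Field k] {V : Type} [Quiver.{0} V]

/-- The type of arrows of the quiver `V`. -/
abbrev ArrowSig (V : Type) [Quiver.{0} V] : Type := Σ x y : V, x ⟶ y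

/-- The word in the free group on the arrows associated to a path. -/
def wordOfPath : ∀ {a b : V}, Quiver.Path a b → FreeGroup (ArrowSig V)
  | _, _, Quiver.Path.nil => 1
  | _, _, Quiver.Path.cons p f => wordOfPath p * FreeGroup.of ⟨_, _, f⟩

/-- The arrow of the symmetrified quiver `f` lies (after forgetting its orientation) in the
set of arrows `T`. -/
def symInSet (T : Set (ArrowSig V)) :
    ∀ {a b : Quiver.Symmetrify V}, (a ⟶ b) → Prop :=
  fun {a b} f => match f with
    | Sum.inl g => (⟨a, b, g⟩ : ArrowSig V) ∈ T
    | Sum.inr g => (⟨b, a, g⟩ : ArrowSig V) ∈ T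

/-- All arrows of the walk `w` lie in `T`. -/
def walkIn (T : Set (ArrowSig V)) :
    ∀ {a b : Quiver.Symmetrify V}, Quiver.Path a b → Prop
  | _, _, Quiver.Path.nil => True
  | _, _, Quiver.Path.cons p f => walkIn T p ∧ symInSet T f

/-- A walk is reduced if it contains no immediate backtracking `f f⁻¹`. -/
def ReducedWalk {a b : Quiver.Symmetrify V} (w : Quiver.Path a b) : Prop :=
  ¬ ∃ (c d : Quiver.Symmetrify V) (u : Quiver.Path a c) (f : c ⟶ d)
      (v : Quiver.Path c b),
      w = ((u.comp f.toPath).comp (Quiver.reverse f).toPath).comp v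

/-- The set of arrows `T` spans an acyclic subgraph of the underlying graph of `Q`:
there are no nontrivial reduced closed walks using only arrows of `T`. -/
def AcyclicArrowSet (T : Set (ArrowSig V)) : Prop :=
  ∀ (a : Quiver.Symmetrify V) (w : Quiver.Path a a),
    walkIn T w → ReducedWalk w → w = Quiver.Path.nil

/-- A maximal tree in the underlying graph of `Q`: an acyclic set of arrows, maximal with
this property. -/
def IsMaximalTree (T : Set (ArrowSig V)) : Prop :=
  AcyclicArrowSet T ∧ ∀ e : ArrowSig V, e ∉ T → ¬ AcyclicArrowSet (insert e T)

section CoveringMorphisms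

variable {W : Type} [Quiver.{0} W]

/-- A covering morphism of bound quivers `p : (Q̂, Î) → (Q, I)`. -/
structure IsCoveringMorphism (p : W ⥤q V) (Jhat : PathIdeal k W) (J : PathIdeal k V) :
    Prop where
  surj : Function.Surjective p.obj
  bij_out : ∀ x : W, Function.Bijective
    (fun g : Σ y : W, x ⟶ y => (⟨p.obj g.1, p.map g.2⟩ : Σ y : V, p.obj x ⟶ y))
  bij_in : ∀ x : W, Function.Bijective
    (fun g : Σ y : W, y ⟶ x => (⟨p.obj g.1, p.map g.2⟩ : Σ y : V, y ⟶ p.obj x))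
  maps_ideal : ∀ {x y : W}, ∀ ρ ∈ Jhat.I x y,
    Finsupp.mapDomain p.mapPath ρ ∈ J.I (p.obj x) (p.obj y)
  lifts_rel : ∀ (x : W) (y : V) (ρ : PathVec k (p.obj x) y), ρ ∈ J.I (p.obj x) y →
    ∃ (yhat : W) (h : p.obj yhat = y) (ρhat : PathVec k x yhat),
      ρhat ∈ Jhat.I x yhat ∧
        Finsupp.mapDomain p.mapPath ρhat = cast (by rw [h]) ρ

/-- The functor between path categories induced by a morphism of quivers. -/
def pathsFunctor (p : W ⥤q V) : Paths W ⥤ Paths V where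
  obj := p.obj
  map := p.mapPath
  map_id _ := rfl
  map_comp f g := p.mapPath_comp f g

/-- `φ` is the simplicial map induced by `p` between the simplicial models of the
classifying spaces: it sends the cell determined by a chain of paths `F` upstairs to the
cell determined by the image chain `F ⋙ p` downstairs. -/
def IsInducedSSetMap (p : W ⥤q V) (Jhat : PathIdeal k W) (J : PathIdeal k V)
    (rhat : HomRel (Paths W)) (r : HomRel (Paths V))
    (φ : BSSet Jhat rhat ⟶ BSSet J r) : Prop :=
  ∀ (Δ : SimplexCategoryᵒᵖ) (F : ComposableArrows (Paths W) (Δ.unop.len))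
    (hF : NonzeroChain Jhat F),
    (φ.app Δ ⟨F ⋙ CategoryTheory.Quotient.functor rhat, ⟨F, hF, rfl⟩⟩).val
      = (F ⋙ pathsFunctor p) ⋙ CategoryTheory.Quotient.functor r

end CoveringMorphisms

section Deck

/-- The group of covering (deck) transformations of a map `f : X → Y`: homeomorphisms
`φ` of `X` with `f ∘ φ = f`. -/
def Deck {X Y : TopCat} (f : X ⟶ Y) : Type :=
  {φ : X ≃ₜ X // ∀ x : X, f (φ x) = f x}

noncomputable instance {X Y : TopCat} (f : X ⟶ Y) : Group (Deck f) where
  one := ⟨Homeomorph.refl _, fun _ => rfl⟩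
  mul φ ψ := ⟨ψ.1.trans φ.1, fun x => (φ.2 _).trans (ψ.2 x)⟩
  inv φ := ⟨φ.1.symm, fun x =>
    (φ.2 (φ.1.symm x)).symm.trans (congrArg f (φ.1.apply_symm_apply x))⟩
  mul_assoc a b c := Subtype.ext (Homeomorph.ext fun _ => rfl)
  one_mul a := Subtype.ext (Homeomorph.ext fun _ => rfl)
  mul_one a := Subtype.ext (Homeomorph.ext fun _ => rfl)
  inv_mul_cancel a := Subtype.ext (Homeomorph.ext fun x => a.1.symm_apply_apply x)

/-- The group homomorphism `f_* : π₁(X, x) → π₁(Y, f x)` induced by a continuous map. -/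
noncomputable def inducedPiOne {X Y : TopCat} (f : X ⟶ Y) (x : X) :
    FundamentalGroup X x →* FundamentalGroup Y (f x) :=
  (FundamentalGroupoid.fundamentalGroupoidFunctor.map f).mapEnd
    (FundamentalGroupoid.mk x)

/-- A covering map `f : X → Y` is regular if the image of `f_* : π₁(X,x) → π₁(Y, f x)` is
a normal subgroup. -/
noncomputable def IsRegularCovering {X Y : TopCat} (f : X ⟶ Y) (x : X) : Prop :=
  ((inducedPiOne f x).range).Normal

end Deck

section Subquivers

/-- The full subquiver on a set `S` of vertices. -/
instance setQuiver (S : Set V) : Quiver.{0} S :=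
  ⟨fun a b => ((a : V) ⟶ (b : V))⟩

/-- The inclusion of a full subquiver. -/
def setIncl (S : Set V) : (S : Type) ⥤q V :=
  ⟨Subtype.val, fun f => f⟩

/-- The vertices visited by a path. -/
def pathVerts : ∀ {a b : V}, Quiver.Path a b → Set V
  | a, _, Quiver.Path.nil => {a}
  | _, b, Quiver.Path.cons p _ => insert b (pathVerts p)

/-- `S` is convex: any path between vertices of `S` stays in `S`. -/
def ConvexSet (S : Set V) : Prop :=
  ∀ {a b : V} (p : Quiver.Path a b), a ∈ S → b ∈ S → pathVerts p ⊆ S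

lemma pathVecComp_single_left {a b c : V} (p : Quiver.Path a b) (ρ : PathVec k b c) :
    pathVecComp (Finsupp.single p 1) ρ = ρ.mapDomain (fun q => p.comp q) := by
  unfold pathVecComp
  rw [Finsupp.sum_single_index]
  · simp [Finsupp.mapDomain]
  · simp

lemma pathVecComp_single_right {a b c : V} (q : Quiver.Path b c) (ρ : PathVec k a b) :
    pathVecComp ρ (Finsupp.single q 1) = ρ.mapDomain (fun p => p.comp q) := by
  unfold pathVecComp
  rw [Finsupp.mapDomain]
  apply Finsupp.sum_congr
  intro p _
  rw [Finsupp.sum_single_index]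
  · rw [mul_one]
  · simp

/-- The restriction `I ∩ kQ'` of the ideal `I` to a full subquiver. -/
noncomputable def restrictIdeal (J : PathIdeal k V) (S : Set V) : PathIdeal k S where
  I a b := (J.I a.val b.val).comap (Finsupp.lmapDomain k k ((setIncl S).mapPath))
  comp_single_left := by
    intro a b c p ρ hρ
    replace hρ : Finsupp.mapDomain ((setIncl S).mapPath) ρ ∈ J.I b.val c.val := hρ
    show Finsupp.mapDomain ((setIncl S).mapPath)
      (pathVecComp (Finsupp.single p 1) ρ) ∈ J.I a.val c.val
    rw [pathVecComp_single_left, ← Finsupp.mapDomain_comp]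
    have he : ((setIncl S).mapPath ∘ fun q : Quiver.Path b c => p.comp q)
        = (fun q : Quiver.Path ((setIncl S).obj b) ((setIncl S).obj c) =>
            ((setIncl S).mapPath p).comp q) ∘ (setIncl S).mapPath := by
      funext q
      exact (setIncl S).mapPath_comp p q
    rw [he, Finsupp.mapDomain_comp, ← pathVecComp_single_left]
    exact J.comp_single_left _ hρ
  comp_single_right := by
    intro a b c q ρ hρ
    replace hρ : Finsupp.mapDomain ((setIncl S).mapPath) ρ ∈ J.I a.val b.val := hρ
    show Finsupp.mapDomain ((setIncl S).mapPath)
      (pathVecComp ρ (Finsupp.single q 1)) ∈ J.I a.val c.val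
    rw [pathVecComp_single_right, ← Finsupp.mapDomain_comp]
    have he : ((setIncl S).mapPath ∘ fun p : Quiver.Path a b => p.comp q)
        = (fun p : Quiver.Path ((setIncl S).obj a) ((setIncl S).obj b) =>
            p.comp ((setIncl S).mapPath q)) ∘ (setIncl S).mapPath := by
      funext p
      exact (setIncl S).mapPath_comp p q
    rw [he, Finsupp.mapDomain_comp, ← pathVecComp_single_right]
    exact J.comp_single_right _ hρ

/-- The walk in `Q` underlying a walk in a subquiver of `Q`. -/
def mapWalkOfSet (S : Set V) {a b : S} (w : Quiver.Path (Quiver.Symmetrify.of.obj a) (Quiver.Symmetrify.of.obj b)) :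
    Quiver.Path (Quiver.Symmetrify.of.obj (a : V)) (Quiver.Symmetrify.of.obj (b : V)) :=
  ((setIncl S).symmetrify).mapPath w

end Subquivers

end BoundQuiver

end Coverings
namespace BoundQuiver

open CategoryTheory

/-!
A semi-normed basis makes the image of every path either zero or a multiple of a single basis
vector. Being a nonzero multiple of one another (lying in one `kˣ`-orbit) is an equivalence
relation compatible with multiplication, so it suffices to check it for two terms of a minimal
relation; there linear independence of the basis splits the relation along basis vectors, and
minimality forces all its terms onto the same basis vector.
-/

lemma _root_.Finset.sum_filter_eq_zero_of_linearIndepOn {ι K M : Type*} [Ring K]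
    [AddCommGroup M] [Module K M] [DecidableEq M] {B : Set M} (hB : LinearIndepOn K id B)
    {s : Finset ι} {b : ι → M} (hb : ∀ i ∈ s, b i ∈ B) {c : ι → K}
    (h : ∑ i ∈ s, c i • b i = 0) (β : M) (hβ : β ∈ s.image b) :
    ∑ i ∈ s with b i = β, c i = 0 := by
  have hgrouped : ∑ γ ∈ s.image b, (∑ i ∈ s with b i = γ, c i) • id γ = 0 := by
    rw [← h, ← Finset.sum_fiberwise_of_maps_to (fun i hi => Finset.mem_image_of_mem b hi)]
    refine Finset.sum_congr rfl fun γ _ => ?_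
    rw [Finset.sum_smul]
    exact Finset.sum_congr rfl fun i hi => by rw [(Finset.mem_filter.mp hi).2, id]
  refine linearIndepOn_iff'.mp hB _ _ ?_ hgrouped β hβ
  simpa [Set.subset_def] using hb

section

variable {k : Type} [Field k] {V : Type} [Quiver.{0} V]

lemma IsMinimalRelation.eq_support_of_restrictVec_mem {J : PathIdeal k V} {a b : V}
    {ρ : PathVec k a b} (hρ : IsMinimalRelation J ρ) {s : Finset (Quiver.Path a b)}
    (hs : s ⊆ ρ.support) (hne : s.Nonempty) (hmem : restrictVec ρ s ∈ J.I a b) :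
    s = ρ.support :=
  not_not.mp fun hne' => hρ.minimal s hs hne hne' hmem

variable [Fintype V] {A : Type} [Ring A] [Algebra k A] (P : Presentation k A V)

lemma Presentation.restrictVec_mem_toIdeal_iff {a b : V} (ρ : PathVec k a b)
    (s : Finset (Quiver.Path a b)) :
    restrictVec ρ s ∈ P.toIdeal.I a b ↔ ∑ w ∈ s, ρ w • P.pathMap w = 0 := by
  rw [P.mem_toIdeal_iff, restrictVec, ← Finsupp.sum_finsetSum_index
    (h := fun w c => c • P.pathMap w) (fun _ => zero_smul k _) (fun _ _ _ => add_smul _ _ _)]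
  simp only [Finsupp.sum_single_index, zero_smul]

lemma Presentation.pathMap_eq_zero_or_smul_mem_basis (S : SemiNormedBasis P) {a b : V}
    (w : Quiver.Path a b) :
    P.pathMap w = 0 ∨ ∃ μ : k, ∃ β ∈ S.B a b, P.pathMap w = μ • β := by
  induction w with
  | nil => exact Or.inr ⟨1, _, S.idem_mem a, (one_smul _ _).symm⟩
  | cons p f ih =>
    have hcons : P.pathMap (p.cons f) = P.pathMap p * P.pathMap f.toPath := P.map_comp p f.toPath
    rcases ih with h0 | ⟨μ, β, hβ, hp⟩
    · exact Or.inl (by rw [hcons, h0, zero_mul])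
    rcases S.mul_mem β hβ _ (S.arrow_mem f) with h0 | ⟨lam, β', hβ', hββ'⟩
    · exact Or.inl (by rw [hcons, hp, smul_mul_assoc, h0, smul_zero])
    · exact Or.inr ⟨μ * lam, β', hβ', by rw [hcons, hp, smul_mul_assoc, hββ', smul_smul]⟩

lemma IsMinimalRelation.pathMap_ne_zero {a b : V} {ρ : PathVec k a b}
    (hρ : IsMinimalRelation P.toIdeal ρ) {w : Quiver.Path a b} (hw : w ∈ ρ.support) :
    P.pathMap w ≠ 0 := by
  intro h0
  have hsingle : {w} = ρ.support := hρ.eq_support_of_restrictVec_mem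
    (Finset.singleton_subset_iff.mpr hw) (Finset.singleton_nonempty w)
    ((P.restrictVec_mem_toIdeal_iff ρ {w}).mpr (by rw [Finset.sum_singleton, h0, smul_zero]))
  have := hρ.two_le_card
  rw [← hsingle, Finset.card_singleton] at this
  omega

lemma IsMinimalRelation.pathMap_mem_orbit (S : SemiNormedBasis P) {a b : V}
    {ρ : PathVec k a b} (hρ : IsMinimalRelation P.toIdeal ρ) {p q : Quiver.Path a b}
    (hp : p ∈ ρ.support) (hq : q ∈ ρ.support) :
    P.pathMap q ∈ MulAction.orbit kˣ (P.pathMap p) := by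
  classical
  have hdec : ∀ w ∈ ρ.support, ∃ μ : k, ∃ β ∈ S.B a b, P.pathMap w = μ • β :=
    fun w hw => (P.pathMap_eq_zero_or_smul_mem_basis S w).resolve_left (hρ.pathMap_ne_zero P hw)
  choose! μ β hβ hμβ using hdec
  have hμ : ∀ w ∈ ρ.support, μ w ≠ 0 := fun w hw h0 =>
    hρ.pathMap_ne_zero P hw (by rw [hμβ w hw, h0, zero_smul])
  have hρ0 : ∑ w ∈ ρ.support, ρ w • P.pathMap w = 0 := (P.mem_toIdeal_iff ρ).mp hρ.mem
  have hrel : ∑ w ∈ ρ.support, (ρ w * μ w) • β w = 0 := by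
    rw [← hρ0]
    exact Finset.sum_congr rfl fun w hw => by rw [hμβ w hw, smul_smul]
  set s := {w ∈ ρ.support | β w = β p}
  have hfiber : restrictVec ρ s ∈ P.toIdeal.I a b := by
    rw [P.restrictVec_mem_toIdeal_iff]
    calc ∑ w ∈ s, ρ w • P.pathMap w = (∑ w ∈ s, ρ w * μ w) • β p := by
          rw [Finset.sum_smul]
          refine Finset.sum_congr rfl fun w hw => ?_
          obtain ⟨hw, hwp⟩ := Finset.mem_filter.mp hw
          rw [hμβ w hw, smul_smul, hwp]
      _ = 0 := by
          rw [Finset.sum_filter_eq_zero_of_linearIndepOn (S.indep a b) hβ hrel (β p)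
            (Finset.mem_image_of_mem β hp), zero_smul]
  have hsupp : s = ρ.support := hρ.eq_support_of_restrictVec_mem (Finset.filter_subset _ _)
    ⟨p, Finset.mem_filter.mpr ⟨hp, rfl⟩⟩ hfiber
  have hqp : β q = β p := (Finset.mem_filter.mp (hsupp ▸ hq : q ∈ s)).2
  refine MulAction.mem_orbit_iff.mpr
    ⟨Units.mk0 (μ q / μ p) (div_ne_zero (hμ q hq) (hμ p hp)), ?_⟩
  rw [Units.smul_mk0, hμβ p hp, hμβ q hq, hqp, smul_smul, div_mul_cancel₀ _ (hμ p hp)]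

lemma NatHomotopic.pathMap_mem_orbit (S : SemiNormedBasis P) {a b : V}
    {p q : Quiver.Path a b} (h : NatHomotopic P.toIdeal p q) :
    P.pathMap q ∈ MulAction.orbit kˣ (P.pathMap p) := by
  induction h with
  | minrel hρ hp hq => exact hρ.pathMap_mem_orbit P S hp hq
  | comp w w' _ ih =>
    obtain ⟨u, hu⟩ := MulAction.mem_orbit_iff.mp ih
    exact MulAction.mem_orbit_iff.mpr
      ⟨u, by simp only [P.map_comp, ← hu, mul_smul_comm, smul_mul_assoc]⟩
  | refl p => exact MulAction.mem_orbit_self _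
  | symm _ ih => exact MulAction.mem_orbit_symm.mp ih
  | trans _ _ ih₁ ih₂ => exact MulAction.orbit_eq_iff.mpr ih₁ ▸ ih₂

end

theorem natHomotopic_classes_proportional_general
    {k : Type} [Field k] {V : Type} [Quiver.{0} V] [Fintype V]
    {A : Type} [Ring A] [Algebra k A]
    (P : Presentation k A V) (S : SemiNormedBasis P)
    {x y : V} (w₁ w₂ : Quiver.Path x y)
    (h : NatHomotopic P.toIdeal w₁ w₂) :
    (∃ lam : k, P.pathMap w₂ = lam • P.pathMap w₁) ∧
      ¬ LinearIndependent k ![P.pathMap w₁, P.pathMap w₂] := by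
  obtain ⟨u, hu⟩ := MulAction.mem_orbit_iff.mp (h.pathMap_mem_orbit P S)
  refine ⟨⟨u, hu.symm⟩, fun hli => ?_⟩
  have hneg_one : (-1 : k) = 0 := (LinearIndependent.pair_iff.mp hli (u : k) (-1) (by
    rw [neg_one_smul, ← Units.smul_def, hu, add_neg_cancel])).2
  exact neg_ne_zero.mpr one_ne_zero hneg_one

/-- (Lemma 5.3 c) Let `A = kQ/I` have a semi-normed basis.  If `w₁, w₂`
are non-zero naturally homotopic paths then `w̄₂ = λ ⬝ w̄₁` for some scalar `λ`; in
particular `w̄₁` and `w̄₂` are linearly dependent. -/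
theorem natHomotopic_classes_proportional
    {k : Type} [Field k] {V : Type} [Quiver.{0} V] [Fintype V]
    {A : Type} [Ring A] [Algebra k A]
    (P : Presentation k A V) (S : SemiNormedBasis P)
    {x y : V} (w₁ w₂ : Quiver.Path x y)
    (h₁ : ¬ P.toIdeal.memP w₁) (h₂ : ¬ P.toIdeal.memP w₂)
    (h : NatHomotopic P.toIdeal w₁ w₂) :
    (∃ lam : k, P.pathMap w₂ = lam • P.pathMap w₁) ∧
      ¬ LinearIndependent k ![P.pathMap w₁, P.pathMap w₂] :=
  natHomotopic_classes_proportional_general P S w₁ w₂ h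

end BoundQuiver
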